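/- Let X be a string whose SA-interval is the nonempty integer interval {i,...,j}, and let c be a character with c ≠ $ such that BWT[i'] ≠ c for all i' ∈ {i,...,j}, but BWT[q] = c for some q ∈ {1,...,n}. Let q_p be the largest position q < i with BWT[q] = c if one exists, and let q_f be the smallest position q > j with BWT[q] = c if one exists; at least one of q_p, q_f exists. Then there is q ∈ {q_p, q_f} (among those that exist) such that for every position p ∈ {1,...,n}, lcp(cX, T[p..n]) ≤ lcp(cX, T[SA[q]−1..n]), where cX denotes the concatenation of the character c with the string X. That is, among all suffixes of T, one maximizing the length of the longest common prefix with cX starts with the occurrence of c in the BWT immediately preceding position i or immediately following position j. -/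

import Mathlib

variable {α : Type*} [LinearOrder α]

/-- The suffix `T[p..n]` of a 1-indexed string `T[1..n]`, as a list. -/
def sfx (T : ℕ → α) (n p : ℕ) : List α :=
  (List.range (n + 1 - p)).map (fun d => T (p + d))

/-- The Burrows–Wheeler transform determined by the text `T`, its suffix array `SA`,
and the end-of-string character `dollar`:  `BWT[i] = T[SA[i]-1]` if `SA[i] > 1`,
and `BWT[i] = $` if `SA[i] = 1`. -/
def bwt (T : ℕ → α) (SA : ℕ → ℕ) (dollar : α) (i : ℕ) : α :=
  if SA i = 1 then dollar else T (SA i - 1)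

/-- Length of the longest common prefix of two lists. -/
def lcp [DecidableEq β] : List β → List β → ℕ
  | a :: u, b :: v => if a = b then lcp u v + 1 else 0
  | _, _ => 0

/-!
Suffixes starting with `c` are exactly the suffixes `T[SA[q]-1..n]` with `BWT[q] = c`, and for
those `lcp(cX, T[SA[q]-1..n]) = 1 + lcp(X, T[SA[q]..n])`; every other suffix has LCP `0` with
`cX`. So it suffices to maximize `lcp(X, T[SA[q]..n])` over the BWT occurrences `q` of `c`.
Since `X` is a prefix of the suffixes in the SA-interval `[i, j]`, the value
`lcp(X, T[SA[q]..n])` increases with `q` below `i` and decreases with `q` above `j`, because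
`lcp(u, w) ≤ min(lcp(u, v), lcp(v, w))` whenever `u < v < w` lexicographically. A maximizing
occurrence lies outside `[i, j]`, and the nearest occurrence on the same side does at least as well.
-/

section Lcp

variable {β : Type*}

theorem lcp_comm [DecidableEq β] : ∀ u v : List β, lcp u v = lcp v u
  | [], [] | [], _ :: _ | _ :: _, [] => rfl
  | a :: u, b :: v => by
    by_cases h : a = b
    · subst h; simp [lcp, lcp_comm u v]
    · simp [lcp, h, Ne.symm h]

@[simp]
theorem lcp_cons_cons_self [DecidableEq β] (a : β) (u v : List β) :
    lcp (a :: u) (a :: v) = lcp u v + 1 := by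
  simp [lcp]

theorem lcp_of_isPrefix [DecidableEq β] :
    ∀ {X w : List β} (v : List β), X <+: w → lcp X v = min (lcp w v) X.length
  | [], _, v, _ => by simp [lcp]
  | a :: X, _, v, ⟨t, rfl⟩ => by
    cases v with
    | nil => simp [lcp]
    | cons b v =>
      by_cases hab : a = b
      · subst hab
        rw [List.cons_append, lcp_cons_cons_self, lcp_cons_cons_self,
          lcp_of_isPrefix v (List.prefix_append X t), List.length_cons]
        omega
      · simp [lcp, hab]

theorem lcp_le_min_of_lt_of_lt [LinearOrder β] :
    ∀ {u v w : List β}, u < v → v < w → lcp u w ≤ min (lcp u v) (lcp v w)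
  | _, _, _, .nil, _ => by simp [lcp]
  | _, _, _, .rel hab, .rel hbc => by simp [lcp, (hab.trans hbc).ne]
  | _, _, _, .rel hab, .cons _ => by simp [lcp, hab.ne]
  | _, _, _, .cons _, .rel hbc => by simp [lcp, hbc.ne]
  | _, _, _, .cons huv, .cons hvw => by
    simpa using lcp_le_min_of_lt_of_lt huv hvw

theorem lcp_le_lcp_of_le_of_lt [LinearOrder β] {X u v w : List β} (hX : X <+: w)
    (huv : u ≤ v) (hvw : v < w) : lcp X u ≤ lcp X v := by
  rw [lcp_of_isPrefix u hX, lcp_of_isPrefix v hX]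
  refine min_le_min_right _ ?_
  rcases huv.lt_or_eq with huv | rfl
  · rw [lcp_comm w u, lcp_comm w v]
    exact (le_min_iff.mp (lcp_le_min_of_lt_of_lt huv hvw)).2
  · exact le_rfl

theorem lcp_le_lcp_of_lt_of_le [LinearOrder β] {X u v w : List β} (hX : X <+: w)
    (hwv : w < v) (hvu : v ≤ u) : lcp X u ≤ lcp X v := by
  rw [lcp_of_isPrefix u hX, lcp_of_isPrefix v hX]
  refine min_le_min_right _ ?_
  rcases hvu.lt_or_eq with hvu | rfl
  · exact (le_min_iff.mp (lcp_le_min_of_lt_of_lt hwv hvu)).1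
  · exact le_rfl

end Lcp

theorem sfx_eq_cons {γ : Type*} (T : ℕ → γ) {n p : ℕ} (hp : p ≤ n) :
    sfx T n p = T p :: sfx T n (p + 1) := by
  unfold sfx
  rw [show n + 1 - p = n + 1 - (p + 1) + 1 by omega, List.range_succ_eq_map, List.map_cons,
    List.map_map]
  refine congrArg₂ List.cons (by simp) (List.map_congr_left fun d _ => ?_)
  simp only [Function.comp_apply]
  congr 1
  omega

theorem Nat.exists_greatest_lt {P : ℕ → Prop} {q₀ i : ℕ} (hq₀1 : 1 ≤ q₀) (hq₀ : P q₀)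
    (hq₀i : q₀ < i) : ∃ q, 1 ≤ q ∧ q₀ ≤ q ∧ q < i ∧ P q ∧ ∀ q', q' < i → P q' → q' ≤ q := by
  classical
  let P' q := 1 ≤ q ∧ P q
  obtain ⟨hq1, hq⟩ : P' (Nat.findGreatest P' (i - 1)) := Nat.findGreatest_spec (by omega) ⟨hq₀1, hq₀⟩
  refine ⟨_, hq1, Nat.le_findGreatest (by omega) ⟨hq₀1, hq₀⟩,
    (Nat.findGreatest_le _).trans_lt (by omega), hq, fun q' hq'i hq' => ?_⟩
  rcases Nat.eq_zero_or_pos q' with rfl | hq'1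
  · exact Nat.zero_le _
  · exact Nat.le_findGreatest (by omega) ⟨hq'1, hq'⟩

theorem Nat.exists_least_gt {P : ℕ → Prop} {q₀ j : ℕ} (hq₀ : P q₀) (hjq₀ : j < q₀) :
    ∃ q, j < q ∧ q ≤ q₀ ∧ P q ∧ ∀ q', j < q' → P q' → q ≤ q' := by
  classical
  have hex : ∃ q, j < q ∧ P q := ⟨q₀, hjq₀, hq₀⟩
  exact ⟨Nat.find hex, (Nat.find_spec hex).1, Nat.find_min' hex ⟨hjq₀, hq₀⟩, (Nat.find_spec hex).2,
    fun q' hjq' hq' => Nat.find_min' hex ⟨hjq', hq'⟩⟩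

section Bwt

variable {γ : Type*} {T : ℕ → γ} {SA : ℕ → ℕ} {dollar c : γ} {n : ℕ}

theorem sfx_pred_eq_cons_of_bwt_eq {q : ℕ} (hSA : 1 ≤ SA q ∧ SA q ≤ n) (hc : c ≠ dollar)
    (hq : bwt T SA dollar q = c) : sfx T n (SA q - 1) = c :: sfx T n (SA q) := by
  have hSA1 : SA q ≠ 1 := fun h => hc (by simp [← hq, bwt, h])
  have hT : T (SA q - 1) = c := by simpa [bwt, hSA1] using hq
  rw [sfx_eq_cons T (by omega), hT, Nat.sub_add_cancel hSA.1]

theorem exists_bwt_eq_of_lcp_cons_ne_zero [DecidableEq γ] (hTn : T n = dollar) (hc : c ≠ dollar)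
    (hSAsurj : ∀ p, 1 ≤ p → p ≤ n → ∃ i, 1 ≤ i ∧ i ≤ n ∧ SA i = p)
    {X : List γ} {p : ℕ} (hp1 : 1 ≤ p) (hp : p ≤ n) (hlcp : lcp (c :: X) (sfx T n p) ≠ 0) :
    ∃ q, 1 ≤ q ∧ q ≤ n ∧ bwt T SA dollar q = c ∧ SA q - 1 = p := by
  rw [sfx_eq_cons T hp] at hlcp
  have hTp : T p = c := by
    by_contra hne
    exact hlcp (by simp [lcp, Ne.symm hne])
  have hpn : p ≠ n := fun h => hc (by rw [← hTp, h, hTn])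
  obtain ⟨q, hq1, hqn, hSAq⟩ := hSAsurj (p + 1) (by omega) (by omega)
  exact ⟨q, hq1, hqn, by rw [bwt, hSAq, if_neg (by omega), Nat.add_sub_cancel, hTp], by omega⟩

theorem lcp_cons_sfx_le_of_forall_bwt_eq [DecidableEq γ] (hTn : T n = dollar) (hc : c ≠ dollar)
    (hSAran : ∀ i, 1 ≤ i → i ≤ n → 1 ≤ SA i ∧ SA i ≤ n)
    (hSAsurj : ∀ p, 1 ≤ p → p ≤ n → ∃ i, 1 ≤ i ∧ i ≤ n ∧ SA i = p)
    {X : List γ} {q : ℕ} (hq1 : 1 ≤ q) (hqn : q ≤ n) (hqc : bwt T SA dollar q = c)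
    (hmax : ∀ q', 1 ≤ q' → q' ≤ n → bwt T SA dollar q' = c →
      lcp X (sfx T n (SA q')) ≤ lcp X (sfx T n (SA q)))
    {p : ℕ} (hp1 : 1 ≤ p) (hp : p ≤ n) :
    lcp (c :: X) (sfx T n p) ≤ lcp (c :: X) (sfx T n (SA q - 1)) := by
  by_cases h0 : lcp (c :: X) (sfx T n p) = 0
  · exact h0 ▸ Nat.zero_le _
  obtain ⟨q', hq'1, hq'n, hq'c, rfl⟩ := exists_bwt_eq_of_lcp_cons_ne_zero hTn hc hSAsurj hp1 hp h0
  rw [sfx_pred_eq_cons_of_bwt_eq (hSAran q' hq'1 hq'n) hc hq'c,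
    sfx_pred_eq_cons_of_bwt_eq (hSAran q hq1 hqn) hc hqc, lcp_cons_cons_self, lcp_cons_cons_self]
  exact Nat.succ_le_succ (hmax q' hq'1 hq'n hq'c)

end Bwt

theorem statement8_general
    (n : ℕ) (T : ℕ → α) (dollar : α) (SA : ℕ → ℕ)
    -- `T[1..n]` is a string of length `n ≥ 1` ending with `$`,
    -- which is smaller than every other character and occurs only at position `n`
    (hTn : T n = dollar)
    -- `SA` is a permutation of `{1,...,n}` sorting the suffixes lexicographically
    (hSAran : ∀ i, 1 ≤ i → i ≤ n → 1 ≤ SA i ∧ SA i ≤ n)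
    (hSAsurj : ∀ p, 1 ≤ p → p ≤ n → ∃ i, 1 ≤ i ∧ i ≤ n ∧ SA i = p)
    (hSAmono : ∀ i j, 1 ≤ i → i < j → j ≤ n → sfx T n (SA i) < sfx T n (SA j))
    (X : List α) (i j : ℕ) (hij : i ≤ j)
    -- `{i,...,j}` is the SA-interval of `X` (nonempty since `i ≤ j`)
    (hint : ∀ i', (1 ≤ i' ∧ i' ≤ n ∧ X <+: sfx T n (SA i')) ↔ (i ≤ i' ∧ i' ≤ j))
    (c : α) (hc : c ≠ dollar)
    (hnoc : ∀ i', i ≤ i' → i' ≤ j → bwt T SA dollar i' ≠ c)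
    (hocc : ∃ q, 1 ≤ q ∧ q ≤ n ∧ bwt T SA dollar q = c) :
    ∃ q, 1 ≤ q ∧ q ≤ n ∧ bwt T SA dollar q = c ∧
      -- `q` is the last occurrence of `c` before `i`, or the first one after `j`
      ((q < i ∧ ∀ q', q' < i → bwt T SA dollar q' = c → q' ≤ q) ∨
       (j < q ∧ ∀ q', j < q' → q' ≤ n → bwt T SA dollar q' = c → q ≤ q')) ∧
      -- and the suffix `T[SA[q]-1..n]` maximizes the LCP with `cX`
      ∀ p, 1 ≤ p → p ≤ n →
        lcp (c :: X) (sfx T n p) ≤ lcp (c :: X) (sfx T n (SA q - 1)) := by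
  obtain ⟨hi1, hin, hXi⟩ := (hint i).mpr ⟨le_rfl, hij⟩
  obtain ⟨hj1, hjn, hXj⟩ := (hint j).mpr ⟨hij, le_rfl⟩
  have hmono : StrictMonoOn (fun q => sfx T n (SA q)) (Set.Icc 1 n) :=
    fun a ha b hb hab => hSAmono a b ha.1 hab hb.2
  obtain ⟨q₀, hq₀, hmax⟩ := Finset.exists_max_image
    {q ∈ Finset.Icc 1 n | bwt T SA dollar q = c} (fun q => lcp X (sfx T n (SA q)))
    (by simpa [Finset.Nonempty, and_assoc] using hocc)
  simp only [Finset.mem_filter, Finset.mem_Icc, and_imp] at hq₀ hmax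
  obtain ⟨⟨hq₀1, hq₀n⟩, hq₀c⟩ := hq₀
  have hq₀ij : q₀ < i ∨ j < q₀ := by
    by_contra! h
    exact hnoc q₀ h.1 h.2 hq₀c
  rcases hq₀ij with hq₀i | hjq₀
  · obtain ⟨qp, hqp1, hq₀qp, hqpi, hqpc, hlast⟩ :=
      Nat.exists_greatest_lt (P := fun q => bwt T SA dollar q = c) hq₀1 hq₀c hq₀i
    refine ⟨qp, hqp1, by omega, hqpc, Or.inl ⟨hqpi, hlast⟩, fun p hp1 hp =>
      lcp_cons_sfx_le_of_forall_bwt_eq hTn hc hSAran hSAsurj hqp1 (by omega) hqpc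
        (fun q hq1 hqn hqc => (hmax q hq1 hqn hqc).trans ?_) hp1 hp⟩
    exact lcp_le_lcp_of_le_of_lt hXi
      (hmono.monotoneOn ⟨hq₀1, by omega⟩ ⟨hqp1, by omega⟩ hq₀qp)
      (hmono ⟨hqp1, by omega⟩ ⟨hi1, hin⟩ hqpi)
  · obtain ⟨qf, hjqf, hqfq₀, ⟨hqfn, hqfc⟩, hfirst⟩ :=
      Nat.exists_least_gt (P := fun q => q ≤ n ∧ bwt T SA dollar q = c) ⟨hq₀n, hq₀c⟩ hjq₀
    refine ⟨qf, by omega, hqfn, hqfc, Or.inr ⟨hjqf, fun q' hjq' hq'n hq'c =>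
        hfirst q' hjq' ⟨hq'n, hq'c⟩⟩, fun p hp1 hp =>
      lcp_cons_sfx_le_of_forall_bwt_eq hTn hc hSAran hSAsurj (by omega) hqfn hqfc
        (fun q hq1 hqn hqc => (hmax q hq1 hqn hqc).trans ?_) hp1 hp⟩
    exact lcp_le_lcp_of_lt_of_le hXj (hmono ⟨hj1, hjn⟩ ⟨by omega, hqfn⟩ hjqf)
      (hmono.monotoneOn ⟨by omega, hqfn⟩ ⟨hq₀1, hq₀n⟩ hqfq₀)

/-- Let `{i,...,j}` be the nonempty SA-interval of `X`, and let
`c ≠ $` occur in the BWT but not in `BWT[i..j]`.  Then some occurrence `q` of `c` in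
the BWT that is either the last one before position `i` or the first one after
position `j` is such that the suffix `T[SA[q]-1..n]` maximizes, over all suffixes of
`T`, the length of the longest common prefix with `cX`. -/
theorem statement8
    (n : ℕ) (T : ℕ → α) (dollar : α) (SA : ℕ → ℕ)
    -- `T[1..n]` is a string of length `n ≥ 1` ending with `$`,
    -- which is smaller than every other character and occurs only at position `n`
    (hn : 1 ≤ n) (hTn : T n = dollar)
    (hdollar : ∀ p, 1 ≤ p → p < n → dollar < T p)
    -- `SA` is a permutation of `{1,...,n}` sorting the suffixes lexicographically
    (hSAran : ∀ i, 1 ≤ i → i ≤ n → 1 ≤ SA i ∧ SA i ≤ n)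
    (hSAsurj : ∀ p, 1 ≤ p → p ≤ n → ∃ i, 1 ≤ i ∧ i ≤ n ∧ SA i = p)
    (hSAmono : ∀ i j, 1 ≤ i → i < j → j ≤ n → sfx T n (SA i) < sfx T n (SA j))
    (X : List α) (i j : ℕ) (hij : i ≤ j)
    -- `{i,...,j}` is the SA-interval of `X` (nonempty since `i ≤ j`)
    (hint : ∀ i', (1 ≤ i' ∧ i' ≤ n ∧ X <+: sfx T n (SA i')) ↔ (i ≤ i' ∧ i' ≤ j))
    (c : α) (hc : c ≠ dollar)
    (hnoc : ∀ i', i ≤ i' → i' ≤ j → bwt T SA dollar i' ≠ c)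
    (hocc : ∃ q, 1 ≤ q ∧ q ≤ n ∧ bwt T SA dollar q = c) :
    ∃ q, 1 ≤ q ∧ q ≤ n ∧ bwt T SA dollar q = c ∧
      -- `q` is the last occurrence of `c` before `i`, or the first one after `j`
      ((q < i ∧ ∀ q', q' < i → bwt T SA dollar q' = c → q' ≤ q) ∨
       (j < q ∧ ∀ q', j < q' → q' ≤ n → bwt T SA dollar q' = c → q ≤ q')) ∧
      -- and the suffix `T[SA[q]-1..n]` maximizes the LCP with `cX`
      ∀ p, 1 ≤ p → p ≤ n →
        lcp (c :: X) (sfx T n p) ≤ lcp (c :: X) (sfx T n (SA q - 1)) :=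
  statement8_general n T dollar SA hTn hSAran hSAsurj hSAmono X i j hij hint c hc hnoc hocc
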